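/- Let f : M₁ → M₂ be a surjective graded R-module homomorphism and P a graded classical S-primary submodule of M₁ with ker(f) ⊆ P. Then f(P) is a graded classical S-primary submodule of M₂. -/

import Mathlib

variable {G : Type*} [AddCommGroup G] [DecidableEq G]
variable {R : Type*} [CommRing R] (𝒜 : G → AddSubmonoid R) [GradedRing 𝒜]
variable {M : Type*} [AddCommGroup M] [Module R M]
variable (ℳ : G → AddSubmonoid M) [SetLike.GradedSMul 𝒜 ℳ] [DirectSum.Decomposition ℳ]

/-- `P` is a graded submodule of the graded module `M`. -/
def IsGradedSubmodule (P : Submodule R M) : Prop :=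
  ∀ m ∈ P, ∀ g : G, (DirectSum.decompose ℳ m g : M) ∈ P

/-- `P` is a graded classical primary submodule of `M`. -/
def IsGrClPrimary (P : Submodule R M) : Prop :=
  IsGradedSubmodule ℳ P ∧ P ≠ ⊤ ∧
    ∀ x y : R, ∀ m : M, SetLike.IsHomogeneousElem 𝒜 x → SetLike.IsHomogeneousElem 𝒜 y →
      SetLike.IsHomogeneousElem ℳ m → (x * y) • m ∈ P →
        x • m ∈ P ∨ ∃ n : ℕ, 0 < n ∧ y ^ n • m ∈ P

/-- `P` is a graded classical `S`-primary submodule of `M`;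
this includes the requirement `(P :_R M) ∩ S = ∅`. -/
def IsGrClSPrimary (S : Submonoid R) (P : Submodule R M) : Prop :=
  IsGradedSubmodule ℳ P ∧ Disjoint ((P.colon ⊤ : Ideal R) : Set R) (S : Set R) ∧
    ∃ s ∈ S, ∀ x y : R, ∀ m : M, SetLike.IsHomogeneousElem 𝒜 x → SetLike.IsHomogeneousElem 𝒜 y →
      SetLike.IsHomogeneousElem ℳ m → (x * y) • m ∈ P →
        (s * x) • m ∈ P ∨ ∃ n : ℕ, 0 < n ∧ (s * y ^ n) • m ∈ P

/-! Since `ker f ≤ P`, an element `m` lies in `P` exactly when `f m` lies in `f(P)`, and a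
homogeneous element of `M₂` of degree `g` is the image of the degree-`g` component of any of its
preimages. So each of the three defining conditions for `f(P)` pulls back along `f` to the
corresponding condition for `P`, with the same witness `s ∈ S`. -/

theorem map_directSumDecompose_of_map_mem {ι N₁ N₂ F : Type*} [DecidableEq ι]
    [AddCommMonoid N₁] [AddCommMonoid N₂] [FunLike F N₁ N₂] [AddMonoidHomClass F N₁ N₂]
    (𝒩₁ : ι → AddSubmonoid N₁) (𝒩₂ : ι → AddSubmonoid N₂)
    [DirectSum.Decomposition 𝒩₁] [DirectSum.Decomposition 𝒩₂]
    {f : F} (hf : ∀ i, ∀ x ∈ 𝒩₁ i, f x ∈ 𝒩₂ i) (x : N₁) (i : ι) :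
    f (DirectSum.decompose 𝒩₁ x i) = DirectSum.decompose 𝒩₂ (f x) i := by
  induction x using DirectSum.Decomposition.inductionOn 𝒩₁ with
  | zero => simp
  | @homogeneous j x =>
    rcases eq_or_ne j i with rfl | hne
    · rw [DirectSum.decompose_of_mem_same 𝒩₁ x.2, DirectSum.decompose_of_mem_same 𝒩₂ (hf j x x.2)]
    · rw [DirectSum.decompose_of_mem_ne 𝒩₁ x.2 hne,
        DirectSum.decompose_of_mem_ne 𝒩₂ (hf j x x.2) hne, map_zero]
  | add x y hx hy =>
    simp only [map_add, DirectSum.decompose_add, DirectSum.add_apply, AddMemClass.coe_add, hx, hy]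

theorem exists_mem_map_eq_of_surjective {ι N₁ N₂ F : Type*} [DecidableEq ι]
    [AddCommMonoid N₁] [AddCommMonoid N₂] [FunLike F N₁ N₂] [AddMonoidHomClass F N₁ N₂]
    {𝒩₁ : ι → AddSubmonoid N₁} (𝒩₂ : ι → AddSubmonoid N₂)
    [DirectSum.Decomposition 𝒩₁] [DirectSum.Decomposition 𝒩₂]
    {f : F} (hsurj : Function.Surjective f) (hf : ∀ i, ∀ x ∈ 𝒩₁ i, f x ∈ 𝒩₂ i)
    {i : ι} {y : N₂} (hy : y ∈ 𝒩₂ i) : ∃ x ∈ 𝒩₁ i, f x = y := by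
  obtain ⟨x, rfl⟩ := hsurj y
  refine ⟨DirectSum.decompose 𝒩₁ x i, SetLike.coe_mem _, ?_⟩
  rw [map_directSumDecompose_of_map_mem 𝒩₁ 𝒩₂ hf, DirectSum.decompose_of_mem_same 𝒩₂ hy]

theorem IsGradedSubmodule.map {ι R M₁ M₂ : Type*} [DecidableEq ι] [CommRing R]
    [AddCommGroup M₁] [Module R M₁] [AddCommGroup M₂] [Module R M₂]
    {ℳ₁ : ι → AddSubmonoid M₁} {ℳ₂ : ι → AddSubmonoid M₂}
    [DirectSum.Decomposition ℳ₁] [DirectSum.Decomposition ℳ₂] {f : M₁ →ₗ[R] M₂}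
    (hf : ∀ i, ∀ m ∈ ℳ₁ i, f m ∈ ℳ₂ i) {P : Submodule R M₁} (hP : IsGradedSubmodule ℳ₁ P) :
    IsGradedSubmodule ℳ₂ (P.map f) := by
  rintro _ ⟨m, hm, rfl⟩ i
  rw [← map_directSumDecompose_of_map_mem ℳ₁ ℳ₂ hf]
  exact Submodule.mem_map_of_mem (hP m hm i)

theorem Submodule.mem_map_iff_of_ker_le {R M M₂ : Type*} [Ring R] [AddCommGroup M] [Module R M]
    [AddCommGroup M₂] [Module R M₂] {f : M →ₗ[R] M₂} {P : Submodule R M}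
    (hker : LinearMap.ker f ≤ P) {m : M} : f m ∈ P.map f ↔ m ∈ P := by
  rw [← mem_comap, comap_map_eq_self hker]

theorem Submodule.map_colon_image {R M M₂ : Type*} [Ring R] [AddCommGroup M] [Module R M]
    [AddCommGroup M₂] [Module R M₂] {f : M →ₗ[R] M₂} {P : Submodule R M}
    (hker : LinearMap.ker f ≤ P) (T : Set M) : (P.map f).colon (f '' T) = P.colon T := by
  ext r
  simp only [mem_colon, Set.forall_mem_image, ← map_smul, mem_map_iff_of_ker_le hker]

theorem map_isGrClSPrimary {M₂ : Type*} [AddCommGroup M₂] [Module R M₂]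
    (ℳ₂ : G → AddSubmonoid M₂) [DirectSum.Decomposition ℳ₂]
    (S : Submonoid R)
    (f : M →ₗ[R] M₂) (hf : Function.Surjective f)
    (hgr : ∀ g : G, ∀ m ∈ ℳ g, f m ∈ ℳ₂ g)
    (P : Submodule R M) (hP : IsGrClSPrimary 𝒜 ℳ S P)
    (hker : LinearMap.ker f ≤ P) :
    IsGrClSPrimary 𝒜 ℳ₂ S (P.map f) := by
  obtain ⟨hPgr, hPS, s, hsS, hs⟩ := hP
  have hcolon : (P.map f).colon ⊤ ≤ P.colon ⊤ := calc
    (P.map f).colon ⊤ ≤ (P.map f).colon (f '' ⊤) := Submodule.colon_mono le_rfl (Set.subset_univ _)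
    _ = P.colon ⊤ := Submodule.map_colon_image hker ⊤
  refine ⟨hPgr.map hgr, hPS.mono_left hcolon, s, hsS, ?_⟩
  rintro x y _ hx hy ⟨g, hm⟩ hxy
  obtain ⟨m, hmg, rfl⟩ := exists_mem_map_eq_of_surjective ℳ₂ hf hgr hm
  simp only [← map_smul, Submodule.mem_map_iff_of_ker_le hker] at hxy ⊢
  exact hs x y m hx hy ⟨g, hmg⟩ hxy
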